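/- arXiv:math/0402354 — 2 statements merged into one kernel-verified Lean document; each statement's English description precedes it below -/
import Mathlib

section
/- For every positive integer n, with m = n(n+1)/2 and λ_n := H_n − (1/2)·ln(2m) − γ − 1/(12m + 6/5), the number ρ_n := 19/(25200m³) − λ_n satisfies 0 < ρ_n < 43/(84000m⁴). -/
set_option maxHeartbeats 4000000

open Real Filter Topology


lemma NB_pos (t : ℝ) (ht : 0 ≤ t) :
    (0:ℝ) < 64506252184 + 561283643920*t + 2263572667716*t^2 + 5609131857248*t^3 + 9560341763436*t^4 + 11898920309664*t^5 + 11208002992760*t^6 + 8167790022336*t^7 + 4663436859468*t^8 + 2096423664016*t^9 + 740380453076*t^10 + 203381409120*t^11 + 42612349764*t^12 + 6583576272*t^13 + 707370924*t^14 + 47224320*t^15 + 1475760*t^16 := by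
  obtain ⟨s, rfl⟩ : ∃ s : ℝ, t = s^2 := ⟨Real.sqrt t, (Real.sq_sqrt ht).symm⟩
  positivity

lemma NC_pos (t : ℝ) (ht : 0 ≤ t) :
    (0:ℝ) < 595978158600 + 5045921763568*t + 20182292301500*t^2 + 50399245609024*t^3 + 87553105603688*t^4 + 111755498060240*t^5 + 108115972183548*t^6 + 80738137087040*t^7 + 47017533262724*t^8 + 21436090796448*t^9 + 7636047854920*t^10 + 2106601861632*t^11 + 442001083520*t^12 + 68289293856*t^13 + 7334807352*t^14 + 489590400*t^15 + 15299700*t^16 := by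
  obtain ⟨s, rfl⟩ : ∃ s : ℝ, t = s^2 := ⟨Real.sqrt t, (Real.sq_sqrt ht).symm⟩
  positivity

lemma log_twoSided (v : ℝ) (h1 : 0 < v) (h2 : v ≤ 1/2) :
    Real.log ((1+v)/(1-v)) ≤ 2*(v + v^3/3 + v^5/5 + v^7/7 + v^9/9 + v^11/11 + v^13/13) + 4*v^15 ∧
    2*(v + v^3/3 + v^5/5 + v^7/7 + v^9/9 + v^11/11 + v^13/13) - 4*v^15 ≤ Real.log ((1+v)/(1-v)) := by
  have hv1 : |v| < 1 := by rw [abs_of_pos h1]; linarith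
  have hv1' : |(-v)| < 1 := by rw [abs_neg]; exact hv1
  have A := Real.abs_log_sub_add_sum_range_le hv1 14
  have B := Real.abs_log_sub_add_sum_range_le hv1' 14
  rw [abs_of_pos h1] at A
  rw [abs_neg, abs_of_pos h1] at B
  simp only [Finset.sum_range_succ, Finset.sum_range_zero] at A B
  rw [abs_le] at A B
  obtain ⟨A1, A2⟩ := A
  obtain ⟨B1, B2⟩ := B
  have hlog : Real.log ((1+v)/(1-v)) = Real.log (1+v) - Real.log (1-v) :=
    Real.log_div (by linarith) (by linarith)
  have h1mv : (1 : ℝ) - -v = 1 + v := by ring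
  rw [h1mv] at B1 B2
  have h15 : v^15/(1-v) ≤ 2*v^15 := by
    rw [div_le_iff₀ (by linarith)]
    nlinarith [pow_pos h1 15]
  rw [hlog]
  norm_num at A1 A2 B1 B2 ⊢
  ring_nf at A1 A2 B1 B2 h15 ⊢
  constructor <;> linarith [A1, A2, B1, B2, h15]

lemma keyB (x : ℝ) (hx : 1 ≤ x) :
    Real.log ((x+2)/x) / 2 < 1/(x+1) - ((1/(6*((x+1)*(x+2)) + 6/5) + 19/(3150*((x+1)*(x+2))^3)) - (1/(6*(x*(x+1)) + 6/5) + 19/(3150*(x*(x+1))^3))) := by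
  have h0 : (0:ℝ) < x := lt_of_lt_of_le one_pos hx
  have h1 : (0:ℝ) < x + 1 := by linarith
  have h2 : (0:ℝ) < x + 2 := by linarith
  have hq1 : (0:ℝ) < 6*(x*(x+1)) + 6/5 := by nlinarith
  have hq2 : (0:ℝ) < 6*((x+1)*(x+2)) + 6/5 := by nlinarith
  have h0' := h0.ne'
  have h1' := h1.ne'
  have h2' := h2.ne'
  have hq1' := hq1.ne'
  have hq2' := hq2.ne'
  have hv0 : (0:ℝ) < 1/(x+1) := by positivity
  have hv2 : 1/(x+1) ≤ 1/2 := by rw [div_le_div_iff₀ h1 two_pos]; linarith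
  have harg : (1 + 1/(x+1))/(1 - 1/(x+1)) = (x+2)/x := by
    have e1 : (1:ℝ) - 1/(x+1) = x/(x+1) := by field_simp; ring
    have hne : (1:ℝ) - 1/(x+1) ≠ 0 := by rw [e1]; exact (div_pos h0 h1).ne'
    rw [e1]
    field_simp
    ring
  obtain ⟨hub, -⟩ := log_twoSided (1/(x+1)) hv0 hv2
  rw [harg] at hub
  have hN : (0:ℝ) < 64506252184 + 561283643920*(x-1) + 2263572667716*(x-1)^2 + 5609131857248*(x-1)^3 + 9560341763436*(x-1)^4 + 11898920309664*(x-1)^5 + 11208002992760*(x-1)^6 + 8167790022336*(x-1)^7 + 4663436859468*(x-1)^8 + 2096423664016*(x-1)^9 + 740380453076*(x-1)^10 + 203381409120*(x-1)^11 + 42612349764*(x-1)^12 + 6583576272*(x-1)^13 + 707370924*(x-1)^14 + 47224320*(x-1)^15 + 1475760*(x-1)^16 := NB_pos (x-1) (by linarith)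
  have hD : (0:ℝ) < 625625 * (x^3 * (x+1)^15 * (x+2)^3 * (6*(x*(x+1)) + 6/5) * (6*((x+1)*(x+2)) + 6/5)) := by
    have := mul_pos (mul_pos (mul_pos (mul_pos (pow_pos h0 3) (pow_pos h1 15)) (pow_pos h2 3)) hq1) hq2
    linarith
  have key : (1/(x+1) - ((1/(6*((x+1)*(x+2)) + 6/5) + 19/(3150*((x+1)*(x+2))^3)) - (1/(6*(x*(x+1)) + 6/5) + 19/(3150*(x*(x+1))^3)))) - ((2*(1/(x+1) + (1/(x+1))^3/3 + (1/(x+1))^5/5 + (1/(x+1))^7/7 + (1/(x+1))^9/9 + (1/(x+1))^11/11 + (1/(x+1))^13/13)) + 4*(1/(x+1))^15)/2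
      = (64506252184 + 561283643920*(x-1) + 2263572667716*(x-1)^2 + 5609131857248*(x-1)^3 + 9560341763436*(x-1)^4 + 11898920309664*(x-1)^5 + 11208002992760*(x-1)^6 + 8167790022336*(x-1)^7 + 4663436859468*(x-1)^8 + 2096423664016*(x-1)^9 + 740380453076*(x-1)^10 + 203381409120*(x-1)^11 + 42612349764*(x-1)^12 + 6583576272*(x-1)^13 + 707370924*(x-1)^14 + 47224320*(x-1)^15 + 1475760*(x-1)^16) / (625625 * (x^3 * (x+1)^15 * (x+2)^3 * (6*(x*(x+1)) + 6/5) * (6*((x+1)*(x+2)) + 6/5))) := by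
    rw [eq_div_iff hD.ne']
    field_simp
    ring
  have hpos := div_pos hN hD
  linarith [hub, key, hpos]

lemma keyC (x : ℝ) (hx : 1 ≤ x) :
    (1/(x+1) - ((1/(6*((x+1)*(x+2)) + 6/5) + 19/(3150*((x+1)*(x+2))^3)) - (1/(6*(x*(x+1)) + 6/5) + 19/(3150*(x*(x+1))^3))) + (43/(5250*((x+1)*(x+2))^4) - 43/(5250*(x*(x+1))^4))) < Real.log ((x+2)/x) / 2 := by
  have h0 : (0:ℝ) < x := lt_of_lt_of_le one_pos hx
  have h1 : (0:ℝ) < x + 1 := by linarith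
  have h2 : (0:ℝ) < x + 2 := by linarith
  have hq1 : (0:ℝ) < 6*(x*(x+1)) + 6/5 := by nlinarith
  have hq2 : (0:ℝ) < 6*((x+1)*(x+2)) + 6/5 := by nlinarith
  have h0' := h0.ne'
  have h1' := h1.ne'
  have h2' := h2.ne'
  have hq1' := hq1.ne'
  have hq2' := hq2.ne'
  have hv0 : (0:ℝ) < 1/(x+1) := by positivity
  have hv2 : 1/(x+1) ≤ 1/2 := by rw [div_le_div_iff₀ h1 two_pos]; linarith
  have harg : (1 + 1/(x+1))/(1 - 1/(x+1)) = (x+2)/x := by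
    have e1 : (1:ℝ) - 1/(x+1) = x/(x+1) := by field_simp; ring
    have hne : (1:ℝ) - 1/(x+1) ≠ 0 := by rw [e1]; exact (div_pos h0 h1).ne'
    rw [e1]
    field_simp
    ring
  obtain ⟨-, hlb⟩ := log_twoSided (1/(x+1)) hv0 hv2
  rw [harg] at hlb
  have hN : (0:ℝ) < 595978158600 + 5045921763568*(x-1) + 20182292301500*(x-1)^2 + 50399245609024*(x-1)^3 + 87553105603688*(x-1)^4 + 111755498060240*(x-1)^5 + 108115972183548*(x-1)^6 + 80738137087040*(x-1)^7 + 47017533262724*(x-1)^8 + 21436090796448*(x-1)^9 + 7636047854920*(x-1)^10 + 2106601861632*(x-1)^11 + 442001083520*(x-1)^12 + 68289293856*(x-1)^13 + 7334807352*(x-1)^14 + 489590400*(x-1)^15 + 15299700*(x-1)^16 := NC_pos (x-1) (by linarith)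
  have hD : (0:ℝ) < 3128125 * (x^4 * (x+1)^15 * (x+2)^4 * (6*(x*(x+1)) + 6/5) * (6*((x+1)*(x+2)) + 6/5)) := by
    have := mul_pos (mul_pos (mul_pos (mul_pos (pow_pos h0 4) (pow_pos h1 15)) (pow_pos h2 4)) hq1) hq2
    linarith
  have key : ((2*(1/(x+1) + (1/(x+1))^3/3 + (1/(x+1))^5/5 + (1/(x+1))^7/7 + (1/(x+1))^9/9 + (1/(x+1))^11/11 + (1/(x+1))^13/13)) - 4*(1/(x+1))^15)/2 - (1/(x+1) - ((1/(6*((x+1)*(x+2)) + 6/5) + 19/(3150*((x+1)*(x+2))^3)) - (1/(6*(x*(x+1)) + 6/5) + 19/(3150*(x*(x+1))^3))) + (43/(5250*((x+1)*(x+2))^4) - 43/(5250*(x*(x+1))^4)))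
      = (595978158600 + 5045921763568*(x-1) + 20182292301500*(x-1)^2 + 50399245609024*(x-1)^3 + 87553105603688*(x-1)^4 + 111755498060240*(x-1)^5 + 108115972183548*(x-1)^6 + 80738137087040*(x-1)^7 + 47017533262724*(x-1)^8 + 21436090796448*(x-1)^9 + 7636047854920*(x-1)^10 + 2106601861632*(x-1)^11 + 442001083520*(x-1)^12 + 68289293856*(x-1)^13 + 7334807352*(x-1)^14 + 489590400*(x-1)^15 + 15299700*(x-1)^16) / (3128125 * (x^4 * (x+1)^15 * (x+2)^4 * (6*(x*(x+1)) + 6/5) * (6*((x+1)*(x+2)) + 6/5))) := by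
    rw [eq_div_iff hD.ne']
    field_simp
    ring
  have hpos := div_pos hN hD
  linarith [hlb, key, hpos]


noncomputable def seqA (n : ℕ) : ℝ :=
  (harmonic n : ℝ) - Real.log ((n:ℝ)*((n:ℝ)+1)) / 2
    - (1/(6*((n:ℝ)*((n:ℝ)+1)) + 6/5) + 19/(3150*((n:ℝ)*((n:ℝ)+1))^3))

noncomputable def seqB (n : ℕ) : ℝ := seqA n + 43/(5250*((n:ℝ)*((n:ℝ)+1))^4)

lemma hlog_split (x : ℝ) (h0 : 0 < x) :
    Real.log ((x+1)*(x+2)) = Real.log ((x+2)/x) + Real.log (x*(x+1)) := by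
  have h1 : (0:ℝ) < x + 1 := by linarith
  have h2 : (0:ℝ) < x + 2 := by linarith
  rw [← Real.log_mul (by positivity) (by positivity)]
  congr 1
  field_simp

lemma seqA_lt (n : ℕ) (hn : 1 ≤ n) : seqA n < seqA (n+1) := by
  have hx : (1:ℝ) ≤ (n:ℝ) := by exact_mod_cast hn
  have h0 : (0:ℝ) < (n:ℝ) := by linarith
  have hk := keyB (n:ℝ) hx
  unfold seqA
  rw [harmonic_succ]
  push_cast
  rw [show ((n:ℝ)+1+1) = (n:ℝ)+2 from by ring]
  rw [hlog_split (n:ℝ) h0]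
  ring_nf
  ring_nf at hk
  linarith

lemma seqB_lt (n : ℕ) (hn : 1 ≤ n) : seqB (n+1) < seqB n := by
  have hx : (1:ℝ) ≤ (n:ℝ) := by exact_mod_cast hn
  have h0 : (0:ℝ) < (n:ℝ) := by linarith
  have hk := keyC (n:ℝ) hx
  unfold seqB seqA
  rw [harmonic_succ]
  push_cast
  rw [show ((n:ℝ)+1+1) = (n:ℝ)+2 from by ring]
  rw [hlog_split (n:ℝ) h0]
  ring_nf
  ring_nf at hk
  linarith

lemma seqA_mono : ∀ k l : ℕ, 1 ≤ k → k ≤ l → seqA k ≤ seqA l := by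
  intro k l hk hkl
  induction l, hkl using Nat.le_induction with
  | base => exact le_rfl
  | succ l hl ih => exact ih.trans (seqA_lt l (hk.trans hl)).le

lemma seqB_anti : ∀ k l : ℕ, 1 ≤ k → k ≤ l → seqB l ≤ seqB k := by
  intro k l hk hkl
  induction l, hkl using Nat.le_induction with
  | base => exact le_rfl
  | succ l hl ih => exact (seqB_lt l (hk.trans hl)).le.trans ih

lemma tendsto_pp : Tendsto (fun n : ℕ => (n:ℝ)*((n:ℝ)+1)) atTop atTop :=
  tendsto_natCast_atTop_atTop.atTop_mul_atTop₀
    (tendsto_atTop_add_const_right _ 1 tendsto_natCast_atTop_atTop)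

lemma tendsto_gpart : Tendsto (fun n : ℕ =>
    1/(6*((n:ℝ)*((n:ℝ)+1)) + 6/5) + 19/(3150*((n:ℝ)*((n:ℝ)+1))^3)) atTop (𝓝 0) := by
  have h1 : Tendsto (fun n : ℕ => 6*((n:ℝ)*((n:ℝ)+1)) + 6/5) atTop atTop :=
    tendsto_atTop_add_const_right _ (6/5) (tendsto_pp.const_mul_atTop (by norm_num))
  have h2 : Tendsto (fun n : ℕ => 3150*((n:ℝ)*((n:ℝ)+1))^3) atTop atTop :=
    ((tendsto_pow_atTop (by norm_num)).comp tendsto_pp).const_mul_atTop (by norm_num)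
  have := (h1.inv_tendsto_atTop.const_mul (1:ℝ)).add (h2.inv_tendsto_atTop.const_mul (19:ℝ))
  simpa [one_div, div_eq_mul_inv] using this

lemma tendsto_c4 : Tendsto (fun n : ℕ => 43/(5250*((n:ℝ)*((n:ℝ)+1))^4)) atTop (𝓝 0) := by
  have h2 : Tendsto (fun n : ℕ => 5250*((n:ℝ)*((n:ℝ)+1))^4) atTop atTop :=
    ((tendsto_pow_atTop (by norm_num)).comp tendsto_pp).const_mul_atTop (by norm_num)
  have := h2.inv_tendsto_atTop.const_mul (43:ℝ)
  simpa [div_eq_mul_inv] using this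

lemma tendsto_diff : Tendsto (fun n : ℕ => seqA n - eulerMascheroniSeq n) atTop (𝓝 0) := by
  have hev : ∀ᶠ n : ℕ in atTop, seqA n - eulerMascheroniSeq n
      = Real.log (1 + 1/(n:ℝ))/2
        - (1/(6*((n:ℝ)*((n:ℝ)+1)) + 6/5) + 19/(3150*((n:ℝ)*((n:ℝ)+1))^3)) := by
    filter_upwards [eventually_ge_atTop 1] with n hn
    have h0 : (0:ℝ) < (n:ℝ) := by exact_mod_cast hn
    have h1 : (0:ℝ) < (n:ℝ)+1 := by linarith
    unfold seqA Real.eulerMascheroniSeq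
    have e1 : Real.log ((n:ℝ)*((n:ℝ)+1)) = Real.log (n:ℝ) + Real.log ((n:ℝ)+1) :=
      Real.log_mul h0.ne' h1.ne'
    have e2 : Real.log (1 + 1/(n:ℝ)) = Real.log ((n:ℝ)+1) - Real.log (n:ℝ) := by
      rw [← Real.log_div h1.ne' h0.ne']
      congr 1
      field_simp
    rw [e1, e2]
    push_cast
    ring
  have hlim : Tendsto (fun n : ℕ => Real.log (1 + 1/(n:ℝ))/2
      - (1/(6*((n:ℝ)*((n:ℝ)+1)) + 6/5) + 19/(3150*((n:ℝ)*((n:ℝ)+1))^3))) atTop (𝓝 0) := by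
    have hl : Tendsto (fun n : ℕ => Real.log (1 + 1/(n:ℝ))) atTop (𝓝 0) := by
      have h1 : Tendsto (fun n : ℕ => 1 + 1/(n:ℝ)) atTop (𝓝 1) := by
        simpa using (tendsto_const_nhds (x := (1:ℝ)) (f := atTop)).add
          tendsto_one_div_atTop_nhds_zero_nat
      have := (Real.continuousAt_log (by norm_num : (1:ℝ) ≠ 0)).tendsto.comp h1
      simpa [Function.comp_def] using this
    have := (hl.div_const 2).sub tendsto_gpart
    simpa using this
  exact Tendsto.congr' (hev.mono fun n h => h.symm) hlim

lemma tendsto_seqA : Tendsto seqA atTop (𝓝 Real.eulerMascheroniConstant) := by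
  have := tendsto_diff.add Real.tendsto_eulerMascheroniSeq
  simpa using this

lemma tendsto_seqB : Tendsto seqB atTop (𝓝 Real.eulerMascheroniConstant) := by
  have := tendsto_seqA.add tendsto_c4
  rw [add_zero] at this
  exact this

lemma seqA_le_gamma (n : ℕ) (hn : 1 ≤ n) : seqA n ≤ Real.eulerMascheroniConstant :=
  ge_of_tendsto tendsto_seqA (eventually_atTop.2 ⟨n, fun k hk => seqA_mono n k hn hk⟩)

lemma gamma_le_seqB (n : ℕ) (hn : 1 ≤ n) : Real.eulerMascheroniConstant ≤ seqB n :=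
  le_of_tendsto tendsto_seqB (eventually_atTop.2 ⟨n, fun k hk => seqB_anti n k hn hk⟩)

/-- Refinement of Lodge's approximation: `ρₙ = 19/(25200 m³) − λₙ` satisfies
`0 < ρₙ < 43/(84000 m⁴)`. -/
theorem lodge_approximation_refined (n : ℕ) (hn : 0 < n)
    (m : ℝ) (hm : m = n * (n + 1) / 2)
    (lam : ℝ) (hlam : lam = (harmonic n : ℝ) - (1 / 2) * Real.log (2 * m)
      - Real.eulerMascheroniConstant - 1 / (12 * m + 6 / 5))
    (ρ : ℝ) (hρ : ρ = 19 / (25200 * m ^ 3) - lam) :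
    0 < ρ ∧ ρ < 43 / (84000 * m ^ 4) := by
  subst hm hlam hρ
  have hn1 : 1 ≤ n := hn
  have hA : seqA n < Real.eulerMascheroniConstant :=
    lt_of_lt_of_le (seqA_lt n hn1) (seqA_le_gamma (n+1) (by omega))
  have hB : Real.eulerMascheroniConstant < seqB n :=
    lt_of_le_of_lt (gamma_le_seqB (n+1) (by omega)) (seqB_lt n hn1)
  unfold seqB seqA at hA hB
  have e0 : 2 * ((n:ℝ) * ((n:ℝ) + 1) / 2) = (n:ℝ)*((n:ℝ)+1) := by ring
  have e1 : Real.log (2 * ((n:ℝ) * ((n:ℝ) + 1) / 2)) = Real.log ((n:ℝ)*((n:ℝ)+1)) := by rw [e0]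
  have e3 : 25200 * ((n:ℝ) * ((n:ℝ) + 1) / 2) ^ 3 = 3150*((n:ℝ)*((n:ℝ)+1))^3 := by ring
  have e4 : 84000 * ((n:ℝ) * ((n:ℝ) + 1) / 2) ^ 4 = 5250*((n:ℝ)*((n:ℝ)+1))^4 := by ring
  have e12 : 12 * ((n:ℝ) * ((n:ℝ) + 1) / 2) + 6/5 = 6*((n:ℝ)*((n:ℝ)+1)) + 6/5 := by ring
  push_cast
  rw [e1, e3, e4, e12]
  constructor <;> linarith
end

section
/- With m = n(n+1)/2, λ_n := H_n − (1/2)·ln(2m) − γ − 1/(12m + 6/5), and ρ_n := 19/(25200m³) − λ_n, the constant 43/84000 in the bound 0 < ρ_n < 43/(84000m⁴) is best possible; precisely, m⁴·ρ_n tends to 43/84000 as n → ∞. -/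
open Real Filter Topology Finset

noncomputable def lodgeLam (n : ℕ) : ℝ :=
  (harmonic n : ℝ) - (1 / 2) * Real.log (2 * ((n : ℝ) * (n + 1) / 2))
    - Real.eulerMascheroniConstant - 1 / (12 * ((n : ℝ) * (n + 1) / 2) + 6 / 5)

noncomputable def lodgeR (x : ℝ) : ℝ :=
  19 / (3150 * x ^ 3 * (x + 1) ^ 3) - 43 / (5250 * x ^ 4 * (x + 1) ^ 4)

noncomputable def lodgeA (n : ℕ) : ℝ := lodgeLam n - lodgeR n

lemma aux_const_div_tendsto (c : ℝ) (f : ℕ → ℝ) (h : ∀ᶠ n : ℕ in atTop, (n : ℝ) ≤ f n) :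
    Tendsto (fun n => c / f n) atTop (𝓝 0) := by
  have h2 := (tendsto_atTop_mono' atTop h tendsto_natCast_atTop_atTop).inv_tendsto_atTop
  simpa [div_eq_mul_inv] using h2.const_mul c

lemma lodgeLam_tendsto : Tendsto lodgeLam atTop (𝓝 0) := by
  have h1 := Real.tendsto_harmonic_sub_log.sub_const Real.eulerMascheroniConstant
  have h2 := Real.tendsto_harmonic_sub_log_add_one.sub_const Real.eulerMascheroniConstant
  have h3 : Tendsto (fun n : ℕ => (1:ℝ) / (12 * ((n : ℝ) * (n + 1) / 2) + 6 / 5))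
      atTop (𝓝 0) := by
    apply aux_const_div_tendsto
    filter_upwards [eventually_ge_atTop 1] with n hn
    have h : (1:ℝ) ≤ (n:ℝ) := by exact_mod_cast hn
    nlinarith
  have h4 := ((h1.add h2).div_const 2).sub h3
  norm_num at h4
  apply h4.congr'
  filter_upwards [eventually_ge_atTop 1] with n hn
  have h : (1:ℝ) ≤ (n:ℝ) := by exact_mod_cast hn
  have hl : Real.log (2 * ((n : ℝ) * (n + 1) / 2)) = Real.log n + Real.log (n + 1) := by
    rw [show (2 * ((n : ℝ) * (n + 1) / 2)) = (n:ℝ) * (n+1) by ring,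
      Real.log_mul (by positivity) (by positivity)]
  simp only [lodgeLam, hl]
  ring

lemma lodgeA_tendsto : Tendsto lodgeA atTop (𝓝 0) := by
  have h1 : Tendsto (fun n : ℕ => lodgeR n) atTop (𝓝 0) := by
    have t1 := aux_const_div_tendsto 19 (fun n : ℕ => 3150 * (n:ℝ) ^ 3 * ((n:ℝ) + 1) ^ 3) ?_
    have t2 := aux_const_div_tendsto 43 (fun n : ℕ => 5250 * (n:ℝ) ^ 4 * ((n:ℝ) + 1) ^ 4) ?_
    · simpa [lodgeR] using t1.sub t2
    · filter_upwards [eventually_ge_atTop 1] with n hn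
      have h : (1:ℝ) ≤ (n:ℝ) := by exact_mod_cast hn
      have h3 : (n:ℝ) ≤ (n:ℝ)^4 := le_self_pow₀ h (by norm_num)
      have h4 : (1:ℝ) * (n:ℝ)^4 ≤ ((n:ℝ)+1)^4 * (n:ℝ)^4 :=
        mul_le_mul_of_nonneg_right (one_le_pow₀ (by linarith)) (by positivity)
      nlinarith
    · filter_upwards [eventually_ge_atTop 1] with n hn
      have h : (1:ℝ) ≤ (n:ℝ) := by exact_mod_cast hn
      have h3 : (n:ℝ) ≤ (n:ℝ)^3 := le_self_pow₀ h (by norm_num)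
      have h4 : (1:ℝ) * (n:ℝ)^3 ≤ ((n:ℝ)+1)^3 * (n:ℝ)^3 :=
        mul_le_mul_of_nonneg_right (one_le_pow₀ (by linarith)) (by positivity)
      nlinarith
  have h2 := lodgeLam_tendsto.sub h1
  rw [sub_zero] at h2
  exact h2.congr (fun n => (rfl : lodgeLam n - lodgeR n = lodgeA n))

noncomputable def lodgeNum (x : ℝ) : ℝ := 39424000 + 465248000 * x ^ 1 + 2338688000 * x ^ 2 + 6723792000 * x ^ 3 + 12403203200 * x ^ 4 + 15505312552 * x ^ 5 + 13455924184 * x ^ 6 + 8128558548 * x ^ 7 + 3356501616 * x ^ 8 + 903729375 * x ^ 9 + 142979475 * x ^ 10 + 10080000 * x ^ 11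

lemma lodge_poly1 (x : ℝ) (hx : 1 ≤ x) :
    lodgeNum x * x ^ 10 ≤ 76 * (7875 * x ^ 9 * (x + 1) ^ 4 * (x + 2) ^ 4 * (5 * x ^ 2 + 5 * x + 1) * (5 * x ^ 2 + 15 * x + 11)) := by
  obtain ⟨y, hy, rfl⟩ : ∃ y : ℝ, 0 ≤ y ∧ x = 1 + y := ⟨x - 1, by linarith, by ring⟩
  simp only [lodgeNum]
  nlinarith [pow_nonneg hy 1, pow_nonneg hy 2, pow_nonneg hy 3, pow_nonneg hy 4, pow_nonneg hy 5, pow_nonneg hy 6, pow_nonneg hy 7, pow_nonneg hy 8, pow_nonneg hy 9, pow_nonneg hy 10, pow_nonneg hy 11, pow_nonneg hy 12, pow_nonneg hy 13, pow_nonneg hy 14, pow_nonneg hy 15, pow_nonneg hy 16, pow_nonneg hy 17, pow_nonneg hy 18, pow_nonneg hy 19, pow_nonneg hy 20, pow_nonneg hy 21]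

lemma lodge_poly2 (x : ℝ) (hx : 2 ≤ x) :
    9 * (x - 1) ^ 9 * x ^ 9 * 1100 ≤ 1100 * (x ^ 9 - (x - 1) ^ 9) * x ^ 10 := by
  obtain ⟨y, hy, rfl⟩ : ∃ y : ℝ, 0 ≤ y ∧ x = 2 + y := ⟨x - 2, by linarith, by ring⟩
  nlinarith [pow_nonneg hy 1, pow_nonneg hy 2, pow_nonneg hy 3, pow_nonneg hy 4, pow_nonneg hy 5, pow_nonneg hy 6, pow_nonneg hy 7, pow_nonneg hy 8, pow_nonneg hy 9, pow_nonneg hy 10, pow_nonneg hy 11, pow_nonneg hy 12, pow_nonneg hy 13, pow_nonneg hy 14, pow_nonneg hy 15, pow_nonneg hy 16, pow_nonneg hy 17, pow_nonneg hy 18, pow_nonneg hy 19]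

lemma lodge_poly3 (x : ℝ) (hx : 2 ≤ x) :
    (x * (x + 1) / 2) ^ 4 * 1100 * x ≤ 62579 * (9 * (x - 1) ^ 9) := by
  obtain ⟨y, hy, rfl⟩ : ∃ y : ℝ, 0 ≤ y ∧ x = 2 + y := ⟨x - 2, by linarith, by ring⟩
  nlinarith [pow_nonneg hy 1, pow_nonneg hy 2, pow_nonneg hy 3, pow_nonneg hy 4, pow_nonneg hy 5, pow_nonneg hy 6, pow_nonneg hy 7, pow_nonneg hy 8, pow_nonneg hy 9]

lemma lodge_step (M : ℕ) (hM : 4 ≤ M) :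
    |lodgeA M - lodgeA (M + 1)| ≤ 1100 / (M : ℝ) ^ 10 := by
  have hx : (4:ℝ) ≤ (M:ℝ) := by exact_mod_cast hM
  have hx0 : (0:ℝ) < (M:ℝ) := by linarith
  have hxx : |(-(2/(M:ℝ)))| < 1 := by
    rw [abs_neg, abs_of_pos (by positivity), div_lt_one hx0]; linarith
  have hlog := Real.abs_log_sub_add_sum_range_le hxx 9
  have hkey : lodgeA M - lodgeA (M+1) =
      (1/2) * ((∑ i ∈ range 9, (-(2/(M:ℝ)))^(i+1)/(i+1)) + Real.log (1 - (-(2/(M:ℝ)))))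
      + lodgeNum (M:ℝ) / (7875 * (M:ℝ)^9 * ((M:ℝ)+1)^4 * ((M:ℝ)+2)^4
          * (5*(M:ℝ)^2+5*(M:ℝ)+1) * (5*(M:ℝ)^2+15*(M:ℝ)+11)) := by
    have hh : ((harmonic (M+1) : ℚ) : ℝ) = (harmonic M : ℝ) + 1/((M:ℝ)+1) := by
      rw [harmonic_succ]; push_cast; ring
    have l1 : Real.log (2 * ((M:ℝ) * ((M:ℝ)+1)/2)) = Real.log (M:ℝ) + Real.log ((M:ℝ)+1) := by
      rw [show 2 * ((M:ℝ) * ((M:ℝ)+1)/2) = (M:ℝ) * ((M:ℝ)+1) by ring,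
        Real.log_mul (by positivity) (by positivity)]
    have l2 : Real.log (2 * (((M:ℝ)+1) * ((M:ℝ)+1+1)/2))
        = Real.log ((M:ℝ)+1) + Real.log ((M:ℝ)+2) := by
      rw [show 2 * (((M:ℝ)+1) * ((M:ℝ)+1+1)/2) = ((M:ℝ)+1) * ((M:ℝ)+2) by ring,
        Real.log_mul (by positivity) (by positivity)]
    have l3 : Real.log (1 - (-(2/(M:ℝ)))) = Real.log ((M:ℝ)+2) - Real.log (M:ℝ) := by
      rw [show 1 - (-(2/(M:ℝ))) = ((M:ℝ)+2)/(M:ℝ) by field_simp; ring,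
        Real.log_div (by positivity) (by positivity)]
    simp only [lodgeA, lodgeLam, lodgeR, lodgeNum, Finset.sum_range_succ,
      Finset.sum_range_zero]
    push_cast
    rw [hh, l1, l2, l3]
    have hM1 : ((M:ℝ)+1) ≠ 0 := by positivity
    have hM2 : ((M:ℝ)+2) ≠ 0 := by positivity
    have hq1 : (5*(M:ℝ)^2+5*(M:ℝ)+1) ≠ 0 := by positivity
    have hq2 : (5*(M:ℝ)^2+15*(M:ℝ)+11) ≠ 0 := by positivity
    field_simp
    ring
  rw [hkey]
  have hQpos : 0 ≤ lodgeNum (M:ℝ) / (7875 * (M:ℝ)^9 * ((M:ℝ)+1)^4 * ((M:ℝ)+2)^4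
      * (5*(M:ℝ)^2+5*(M:ℝ)+1) * (5*(M:ℝ)^2+15*(M:ℝ)+11)) := by
    simp only [lodgeNum]; positivity
  have hQle : lodgeNum (M:ℝ) / (7875 * (M:ℝ)^9 * ((M:ℝ)+1)^4 * ((M:ℝ)+2)^4
      * (5*(M:ℝ)^2+5*(M:ℝ)+1) * (5*(M:ℝ)^2+15*(M:ℝ)+11)) ≤ 76 / (M:ℝ)^10 := by
    rw [div_le_div_iff₀ (by positivity) (by positivity)]
    exact lodge_poly1 (M:ℝ) (by linarith)
  have hlog2 : |(-(2/(M:ℝ)))|^(9+1) / (1 - |(-(2/(M:ℝ)))|) ≤ 2048 / (M:ℝ)^10 := by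
    rw [abs_neg, abs_of_pos (by positivity : (0:ℝ) < 2/(M:ℝ))]
    have h1 : (2:ℝ)/(M:ℝ) ≤ 1/2 := by
      rw [div_le_div_iff₀ hx0 (by norm_num : (0:ℝ) < 2)]; linarith
    have h2 : (1:ℝ)/2 ≤ 1 - 2/(M:ℝ) := by linarith
    calc (2/(M:ℝ))^(9+1) / (1 - 2/(M:ℝ)) ≤ (2/(M:ℝ))^(9+1) / (1/2) := by
          gcongr
      _ = 2048 / (M:ℝ)^10 := by
          rw [div_pow]; field_simp; ring
  calc |(1/2) * ((∑ i ∈ range 9, (-(2/(M:ℝ)))^(i+1)/(i+1)) + Real.log (1 - (-(2/(M:ℝ)))))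
      + lodgeNum (M:ℝ) / (7875 * (M:ℝ)^9 * ((M:ℝ)+1)^4 * ((M:ℝ)+2)^4
          * (5*(M:ℝ)^2+5*(M:ℝ)+1) * (5*(M:ℝ)^2+15*(M:ℝ)+11))|
      ≤ (1/2) * |(∑ i ∈ range 9, (-(2/(M:ℝ)))^(i+1)/(i+1)) + Real.log (1 - (-(2/(M:ℝ))))|
        + lodgeNum (M:ℝ) / (7875 * (M:ℝ)^9 * ((M:ℝ)+1)^4 * ((M:ℝ)+2)^4
          * (5*(M:ℝ)^2+5*(M:ℝ)+1) * (5*(M:ℝ)^2+15*(M:ℝ)+11)) := by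
        refine (abs_add_le _ _).trans ?_
        rw [abs_mul, abs_of_nonneg hQpos, abs_of_nonneg (by norm_num : (0:ℝ) ≤ 1/2)]
    _ ≤ (1/2) * (2048 / (M:ℝ)^10) + 76 / (M:ℝ)^10 :=
        add_le_add (mul_le_mul_of_nonneg_left (hlog.trans hlog2) (by norm_num)) hQle
    _ = 1100 / (M:ℝ)^10 := by ring

lemma lodge_frac2 (x : ℝ) (hx : 2 ≤ x) :
    1100 / x ^ 10 ≤ 1100 / (9 * (x-1)^9) - 1100 / (9 * x^9) := by
  have h1 : (0:ℝ) < x - 1 := by linarith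
  have h0 : (0:ℝ) < x := by linarith
  have key : 1100 / (9*(x-1)^9) - 1100 / (9*x^9)
      = 1100 * (x^9 - (x-1)^9) / (9 * (x-1)^9 * x^9) := by
    field_simp
  rw [key, div_le_div_iff₀ (by positivity) (by positivity)]
  calc 1100 * (9*(x-1)^9*x^9) = 9*(x-1)^9*x^9*1100 := by ring
    _ ≤ 1100 * (x^9-(x-1)^9) * x^10 := lodge_poly2 x hx

lemma lodge_tele (n : ℕ) (hn : 4 ≤ n) : ∀ M : ℕ, n ≤ M →
    |lodgeA n - lodgeA M| ≤ 1100 / (9 * ((n:ℝ)-1)^9) - 1100 / (9 * ((M:ℝ)-1)^9) := by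
  intro M hM
  induction M, hM using Nat.le_induction with
  | base => simp
  | succ M hnM ih =>
    have hM4 : 4 ≤ M := le_trans hn hnM
    have hx : (4:ℝ) ≤ (M:ℝ) := by exact_mod_cast hM4
    have hs := (lodge_step M hM4).trans (lodge_frac2 (M:ℝ) (by linarith))
    have tri := abs_sub_le (lodgeA n) (lodgeA M) (lodgeA (M+1))
    have hcast : ((M:ℝ)+1) - 1 = (M:ℝ) := by ring
    have : |lodgeA n - lodgeA (M+1)| ≤ 1100 / (9 * ((n:ℝ)-1)^9) - 1100 / (9 * (M:ℝ)^9) := by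
      have := add_le_add ih hs
      linarith
    calc |lodgeA n - lodgeA (M+1)| ≤ 1100 / (9 * ((n:ℝ)-1)^9) - 1100 / (9 * (M:ℝ)^9) := this
      _ = 1100 / (9 * ((n:ℝ)-1)^9) - 1100 / (9 * ((((M+1):ℕ):ℝ)-1)^9) := by push_cast; ring

lemma lodge_bound (n : ℕ) (hn : 4 ≤ n) : |lodgeA n| ≤ 1100 / (9 * ((n:ℝ)-1)^9) := by
  have ht : Tendsto (fun M : ℕ => |lodgeA n - lodgeA M|) atTop (𝓝 |lodgeA n - 0|) :=
    (tendsto_const_nhds.sub lodgeA_tendsto).abs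
  rw [sub_zero] at ht
  refine le_of_tendsto ht ?_
  filter_upwards [eventually_ge_atTop n] with M hM
  have h2 := lodge_tele n hn M hM
  have hM4 : 4 ≤ M := le_trans hn hM
  have hx : (4:ℝ) ≤ (M:ℝ) := by exact_mod_cast hM4
  have h4 : (0:ℝ) < ((M:ℝ)-1)^9 := pow_pos (by linarith) 9
  have h3 : (0:ℝ) ≤ 1100 / (9*((M:ℝ)-1)^9) := div_nonneg (by norm_num) (by linarith)
  linarith


/-- The constant `43/84000` in the refined Lodge bound is best possible:
`m⁴·ρₙ → 43/84000` where `ρₙ = 19/(25200 m³) − λₙ`. -/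
theorem lodge_second_constant_best_possible :
    Tendsto (fun n : ℕ =>
        ((n : ℝ) * (n + 1) / 2) ^ 4 *
          (19 / (25200 * ((n : ℝ) * (n + 1) / 2) ^ 3) -
            ((harmonic n : ℝ) - (1 / 2) * Real.log (2 * ((n : ℝ) * (n + 1) / 2))
              - Real.eulerMascheroniConstant
              - 1 / (12 * ((n : ℝ) * (n + 1) / 2) + 6 / 5))))
      atTop (𝓝 (43 / 84000)) := by
  have key : Tendsto (fun n : ℕ => ((n:ℝ)*((n:ℝ)+1)/2)^4 * lodgeA n) atTop (𝓝 0) := by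
    apply squeeze_zero_norm' (a := fun n : ℕ => (62579:ℝ) / (n:ℝ))
      ?_ (tendsto_const_div_atTop_nhds_zero_nat 62579)
    filter_upwards [eventually_ge_atTop 4] with n hn
    have hx : (4:ℝ) ≤ (n:ℝ) := by exact_mod_cast hn
    have h1 : ‖((n:ℝ)*((n:ℝ)+1)/2)^4 * lodgeA n‖
        = ((n:ℝ)*((n:ℝ)+1)/2)^4 * |lodgeA n| := by
      rw [Real.norm_eq_abs, abs_mul, abs_of_nonneg (by positivity : (0:ℝ) ≤ ((n:ℝ)*((n:ℝ)+1)/2)^4)]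
    rw [h1]
    have h2 := lodge_bound n hn
    have h3 : ((n:ℝ)*((n:ℝ)+1)/2)^4 * |lodgeA n|
        ≤ ((n:ℝ)*((n:ℝ)+1)/2)^4 * (1100/(9*((n:ℝ)-1)^9)) :=
      mul_le_mul_of_nonneg_left h2 (by positivity)
    have hp : (0:ℝ) < 9*((n:ℝ)-1)^9 := by
      have := pow_pos (show (0:ℝ) < (n:ℝ)-1 by linarith) 9
      linarith
    have h4 : ((n:ℝ)*((n:ℝ)+1)/2)^4 * (1100/(9*((n:ℝ)-1)^9)) ≤ 62579/(n:ℝ) := by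
      rw [show ((n:ℝ)*((n:ℝ)+1)/2)^4 * (1100/(9*((n:ℝ)-1)^9))
          = (((n:ℝ)*((n:ℝ)+1)/2)^4 * 1100)/(9*((n:ℝ)-1)^9) by ring,
        div_le_div_iff₀ hp (by linarith : (0:ℝ) < (n:ℝ))]
      exact lodge_poly3 (n:ℝ) (by linarith)
    linarith
  have key2 : Tendsto (fun n : ℕ => (43:ℝ)/84000 - ((n:ℝ)*((n:ℝ)+1)/2)^4 * lodgeA n)
      atTop (𝓝 (43/84000)) := by
    have := (tendsto_const_nhds (x := (43:ℝ)/84000) (f := atTop (α := ℕ))).sub key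
    rwa [sub_zero] at this
  apply key2.congr'
  filter_upwards [eventually_ge_atTop 1] with n hn
  have hx : (1:ℝ) ≤ (n:ℝ) := by exact_mod_cast hn
  have hx0 : (0:ℝ) < (n:ℝ) := by linarith
  have hx1 : (0:ℝ) < (n:ℝ)+1 := by linarith
  simp only [lodgeA, lodgeLam, lodgeR]
  field_simp
  ring
end
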